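/- Let φ_{n+1}(ξ) = ∫_{-1}^ξ w(t) L_n(t) dt (n ≥ 1) with w = 1/β̂, β̂ piecewise constant and positive on [-1,1] with a single interior discontinuity. Then φ_{n+1} changes sign exactly n-1 times in the open interval (-1,1). -/

import Mathlib

open MeasureTheory intervalIntegral

/-- The piecewise constant coefficient on the reference interval. -/
noncomputable def betaHat (α βm βp : ℝ) (ξ : ℝ) : ℝ := if ξ ≤ α then βm else βp

/-- Generalized Lobatto polynomial `φ_{n+1}` obtained by integrating `w · L_n`. -/
noncomputable def phiGen' (α βm βp : ℝ) (L : ℕ → Polynomial ℝ) (n : ℕ) (ξ : ℝ) : ℝ :=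
  ∫ t in (-1 : ℝ)..ξ, (betaHat α βm βp t)⁻¹ * (L n).eval t

/-!
`φ = phiGen' α βm βp L n` vanishes at `-1` and, by orthogonality of `L n` to `L 0 = 1`, at `1`;
integration by parts turns the orthogonality of `L n` to polynomials of degree `< n` into
orthogonality of `φ` to polynomials of degree `< n - 1`. Between two zeros of `φ` the weighted
integral of `L n` vanishes, so `L n` has a root there: `φ` has at most `n + 1` zeros, which cut
`[-1, 1]` into `m ≤ n` gaps on each of which `φ` has a constant sign. If `φ` changed sign at fewer
than `n - 1` interior zeros, the monic polynomial vanishing exactly at those would have degree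
`< n - 1` and its product with `φ` would keep one sign, contradicting orthogonality. Hence
`m = n` and the sign alternates from gap to gap.
-/

open Filter Topology Polynomial Set

theorem IsPreconnected.mul_pos_of_ne_zero {X : Type*} [TopologicalSpace X] {s : Set X}
    (hs : IsPreconnected s) {f : X → ℝ} (hf : ContinuousOn f s) (h0 : ∀ x ∈ s, f x ≠ 0)
    {x y : X} (hx : x ∈ s) (hy : y ∈ s) : 0 < f x * f y := by
  rcases (h0 x hx).lt_or_gt with hfx | hfx <;> rcases (h0 y hy).lt_or_gt with hfy | hfy
  · exact mul_pos_of_neg_of_neg hfx hfy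
  · obtain ⟨c, hc, hc0⟩ := hs.intermediate_value hx hy hf ⟨hfx.le, hfy.le⟩
    exact absurd hc0 (h0 c hc)
  · obtain ⟨c, hc, hc0⟩ := hs.intermediate_value hy hx hf ⟨hfy.le, hfx.le⟩
    exact absurd hc0 (h0 c hc)
  · exact mul_pos hfx hfy

theorem Polynomial.mem_span_image_Iio_of_degree_lt {R : Type*} [Ring R] {L : ℕ → R[X]}
    (hmonic : ∀ k, (L k).Monic) (hdeg : ∀ k, (L k).natDegree = k) {n : ℕ} {p : R[X]}
    (hp : p.degree < n) : p ∈ Submodule.span R (L '' Iio n) := by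
  induction n generalizing p with
  | zero =>
    rw [Nat.cast_zero, Nat.WithBot.lt_zero_iff, degree_eq_bot] at hp
    simp [hp]
  | succ n ih =>
    have hLn : (L n).coeff n = 1 := by simpa [hdeg n] using (hmonic n).coeff_natDegree
    have hr : (p - C (p.coeff n) * L n).degree < n := by
      rw [degree_lt_iff_coeff_zero]
      intro j hj
      rcases hj.eq_or_lt with rfl | hj
      · simp [hLn]
      · have hpj : p.coeff j = 0 := coeff_eq_zero_of_degree_lt (hp.trans_le (by exact_mod_cast hj))
        have hLj : (L n).coeff j = 0 := coeff_eq_zero_of_natDegree_lt (by rwa [hdeg])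
        simp [hpj, hLj]
    have hspan : Submodule.span R (L '' Iio n) ≤ Submodule.span R (L '' Iio (n + 1)) :=
      Submodule.span_mono (image_mono (Iio_subset_Iio n.le_succ))
    rw [← sub_add_cancel p (C (p.coeff n) * L n)]
    refine add_mem (hspan (ih hr)) ?_
    rw [← smul_eq_C_mul]
    exact Submodule.smul_mem _ _ (Submodule.subset_span ⟨n, Nat.lt_succ_self n, rfl⟩)

theorem integral_mul_eval_eq_zero_of_mem_span {h : ℝ → ℝ} {a b : ℝ} {S : Set ℝ[X]}
    (hh : ∀ q : ℝ[X], IntervalIntegrable (fun x => h x * q.eval x) volume a b)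
    (hS : ∀ q ∈ S, ∫ x in a..b, h x * q.eval x = 0) {q : ℝ[X]}
    (hq : q ∈ Submodule.span ℝ S) : ∫ x in a..b, h x * q.eval x = 0 := by
  induction hq using Submodule.span_induction with
  | mem q hq => exact hS q hq
  | zero => simp
  | add p q _ _ hp hq =>
    simp only [eval_add, mul_add]
    rw [integral_add (hh p) (hh q), hp, hq, add_zero]
  | smul c q _ hq =>
    simp only [eval_smul, smul_eq_mul, mul_left_comm _ c, intervalIntegral.integral_const_mul, hq,
      mul_zero]

theorem exists_mem_Ioo_eq_zero_of_integral_mul_eq_zero {w g : ℝ → ℝ} {a b : ℝ} (hab : a < b)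
    (hw : ∀ x ∈ Ioo a b, 0 < w x) (hg : ContinuousOn g (Ioo a b))
    (hint : IntervalIntegrable (fun x => w x * g x) volume a b)
    (h : ∫ x in a..b, w x * g x = 0) : ∃ c ∈ Ioo a b, g c = 0 := by
  by_contra! hne
  have hx₀ : (a + b) / 2 ∈ Ioo a b := ⟨by linarith, by linarith⟩
  have hpos : 0 < ∫ x in a..b, g ((a + b) / 2) * (w x * g x) := by
    refine intervalIntegral_pos_of_pos_on (hint.const_mul _) (fun x hx => ?_) hab
    have := isPreconnected_Ioo.mul_pos_of_ne_zero hg hne hx₀ hx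
    rw [mul_left_comm]
    exact mul_pos (hw x hx) this
  rw [intervalIntegral.integral_const_mul, h, mul_zero] at hpos
  exact hpos.false

theorem mul_pos_of_mul_pos_of_mul_pos {a b c : ℝ} (hab : 0 < a * b) (hbc : 0 < b * c) :
    0 < a * c := by
  have hb : b ≠ 0 := by rintro rfl; simp at hab
  have : 0 < a * c * b ^ 2 := by nlinarith [mul_pos hab hbc]
  exact pos_of_mul_pos_left this (sq_nonneg b)

theorem mul_pos_of_forall_mul_succ_pos {a : ℕ → ℝ} {m : ℕ}
    (h : ∀ k, k + 1 < m → 0 < a k * a (k + 1)) (h₀ : a 0 ≠ 0) :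
    ∀ k < m, 0 < a 0 * a k := by
  intro k
  induction k with
  | zero => intro _; exact mul_self_pos.2 h₀
  | succ k ih => intro hk; exact mul_pos_of_mul_pos_of_mul_pos (ih (by omega)) (h k hk)

theorem Finset.exists_strictMonoOn_image_Iic_eq {α : Type*} [LinearOrder α] (s : Finset α)
    {m : ℕ} (hs : s.card = m + 1) :
    ∃ ζ : ℕ → α, StrictMonoOn ζ (Set.Iic m) ∧ ζ '' Set.Iic m = s := by
  refine ⟨fun k => s.orderEmbOfFin hs (Fin.clamp k m), fun j hj k hk hjk => ?_, ?_⟩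
  · refine (s.orderEmbOfFin hs).strictMono ?_
    simp only [Fin.lt_def, Fin.coe_clamp, min_eq_left (Set.mem_Iic.1 hj),
      min_eq_left (Set.mem_Iic.1 hk)]
    exact hjk
  · rw [← range_orderEmbOfFin s hs]
    ext x
    constructor
    · rintro ⟨k, -, rfl⟩
      exact mem_range_self _
    · rintro ⟨j, rfl⟩
      refine ⟨j, Set.mem_Iic.2 (Nat.lt_succ_iff.1 j.is_lt), ?_⟩
      simp only [Fin.clamp, min_eq_left (Nat.lt_succ_iff.1 j.is_lt)]

theorem exists_partition_of_card_zeros_le {f : ℝ → ℝ} {a b : ℝ} {N : ℕ} (hab : a < b)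
    (ha : f a = 0) (hb : f b = 0)
    (hN : ∀ s : Finset ℝ, (∀ x ∈ s, f x = 0) → s.card ≤ N + 1) :
    ∃ m ≤ N, ∃ ζ : ℕ → ℝ, StrictMonoOn ζ (Iic m) ∧ ζ 0 = a ∧ ζ m = b ∧
      ∀ k < m, ∀ x ∈ Ioo (ζ k) (ζ (k + 1)), f x ≠ 0 := by
  have hfin : {x | f x = 0}.Finite := by
    by_contra hinf
    obtain ⟨s, hs, hcard⟩ := Set.Infinite.exists_subset_card_eq hinf (N + 2)
    have := hN s fun x hx => hs hx
    omega
  set F := (hfin.inter_of_left (Icc a b)).toFinset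
  have hmem : ∀ x, x ∈ F ↔ f x = 0 ∧ x ∈ Icc a b := by simp [F]
  obtain ⟨m, hm⟩ : ∃ m, F.card = m + 1 :=
    Nat.exists_eq_succ_of_ne_zero (Finset.card_ne_zero_of_mem ((hmem a).2 ⟨ha, le_rfl, hab.le⟩))
  obtain ⟨ζ, hζ, himage⟩ := F.exists_strictMonoOn_image_Iic_eq hm
  have hζF : ∀ x, x ∈ F ↔ ∃ k ≤ m, ζ k = x := fun x => by
    rw [← Finset.mem_coe, ← himage]; rfl
  have hζab : ∀ k ≤ m, ζ k ∈ Icc a b := fun k hk => ((hmem _).1 ((hζF _).2 ⟨k, hk, rfl⟩)).2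
  refine ⟨m, by have := hN F fun x hx => ((hmem x).1 hx).1; omega, ζ, hζ, ?_, ?_, ?_⟩
  · obtain ⟨k, hk, hka⟩ := (hζF a).1 ((hmem a).2 ⟨ha, le_rfl, hab.le⟩)
    refine le_antisymm ?_ (hζab 0 (Nat.zero_le m)).1
    exact hka ▸ hζ.monotoneOn (mem_Iic.2 (Nat.zero_le m)) (mem_Iic.2 hk) (Nat.zero_le k)
  · obtain ⟨k, hk, hkb⟩ := (hζF b).1 ((hmem b).2 ⟨hb, hab.le, le_rfl⟩)
    refine le_antisymm (hζab m le_rfl).2 ?_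
    exact hkb ▸ hζ.monotoneOn (mem_Iic.2 hk) (mem_Iic.2 le_rfl) hk
  · intro k hk x hx hx0
    have hxab : x ∈ Icc a b := ⟨(hζab k hk.le).1.trans hx.1.le, hx.2.le.trans (hζab (k + 1) hk).2⟩
    obtain ⟨j, hj, rfl⟩ := (hζF x).1 ((hmem x).2 ⟨hx0, hxab⟩)
    have h₁ := (hζ.lt_iff_lt (mem_Iic.2 hk.le) (mem_Iic.2 hj)).1 hx.1
    have h₂ := (hζ.lt_iff_lt (mem_Iic.2 hj) (mem_Iic.2 (Nat.succ_le_of_lt hk))).1 hx.2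
    omega

section SignChanges

variable {f : ℝ → ℝ} {ζ : ℕ → ℝ} {m : ℕ}

noncomputable def gapMid (ζ : ℕ → ℝ) (k : ℕ) : ℝ := (ζ k + ζ (k + 1)) / 2

/-- `k` marks a sign change of `f` at `ζ (k + 1)`, between the gaps `(ζ k, ζ (k + 1))` and
`(ζ (k + 1), ζ (k + 2))`. -/
noncomputable def signChanges (f : ℝ → ℝ) (ζ : ℕ → ℝ) (m : ℕ) : Finset ℕ :=
  (Finset.range (m - 1)).filter fun k => f (gapMid ζ k) * f (gapMid ζ (k + 1)) < 0

theorem card_signChanges_le : (signChanges f ζ m).card ≤ m - 1 :=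
  (Finset.card_filter_le _ _).trans (Finset.card_range _).le

noncomputable def signChangePoly (f : ℝ → ℝ) (ζ : ℕ → ℝ) (m : ℕ) : ℝ[X] :=
  ∏ k ∈ signChanges f ζ m, (X - C (ζ (k + 1)))

theorem degree_signChangePoly : (signChangePoly f ζ m).degree = (signChanges f ζ m).card := by
  simp [signChangePoly, degree_prod]

variable (hζ : StrictMonoOn ζ (Iic m))
include hζ

theorem lt_succ_of_strictMonoOn {k : ℕ} (hk : k < m) : ζ k < ζ (k + 1) :=
  hζ (mem_Iic.2 hk.le) (mem_Iic.2 hk) k.lt_succ_self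

theorem gapMid_mem {k : ℕ} (hk : k < m) : gapMid ζ k ∈ Ioo (ζ k) (ζ (k + 1)) := by
  have := lt_succ_of_strictMonoOn hζ hk
  exact ⟨by unfold gapMid; linarith, by unfold gapMid; linarith⟩

theorem notMem_Ioo_of_strictMonoOn {j k : ℕ} (hj : j ≤ m) (hk : k < m) :
    ζ j ∉ Ioo (ζ k) (ζ (k + 1)) := fun h => by
  have h₁ := (hζ.lt_iff_lt (mem_Iic.2 hk.le) (mem_Iic.2 hj)).1 h.1
  have h₂ := (hζ.lt_iff_lt (mem_Iic.2 hj) (mem_Iic.2 (Nat.succ_le_of_lt hk))).1 h.2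
  omega

theorem sub_mul_sub_pos {j k : ℕ} (hj : j + 1 < m) (hjk : j ≠ k) (hk : k + 1 < m) {x y : ℝ}
    (hx : x ∈ Ioo (ζ k) (ζ (k + 1))) (hy : y ∈ Ioo (ζ (k + 1)) (ζ (k + 2))) :
    0 < (x - ζ (j + 1)) * (y - ζ (j + 1)) := by
  rcases hjk.lt_or_gt with h | h
  · have : ζ (j + 1) ≤ ζ k := hζ.monotoneOn (mem_Iic.2 hj.le) (mem_Iic.2 (by omega)) h
    exact mul_pos (by linarith [hx.1]) (by linarith [hx.1, hy.1, hx.2])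
  · have : ζ (k + 2) ≤ ζ (j + 1) := hζ.monotoneOn (mem_Iic.2 hk) (mem_Iic.2 hj.le) (by omega)
    exact mul_pos_of_neg_of_neg (by linarith [hx.2, hy.1, hy.2]) (by linarith [hy.2])

theorem eval_signChangePoly_ne_zero {k : ℕ} (hk : k < m) {x : ℝ}
    (hx : x ∈ Ioo (ζ k) (ζ (k + 1))) : (signChangePoly f ζ m).eval x ≠ 0 := by
  simp only [signChangePoly, eval_prod, eval_sub, eval_X, eval_C, Finset.prod_ne_zero_iff,
    sub_ne_zero]
  rintro j hj rfl
  have hj : j + 1 ≤ m := by simp [signChanges] at hj; omega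
  exact notMem_Ioo_of_strictMonoOn hζ hj hk hx

theorem signChangePoly_mul_pos (hgap : ∀ k < m, ∀ x ∈ Ioo (ζ k) (ζ (k + 1)), f x ≠ 0) {k : ℕ}
    (hk : k + 1 < m) :
    0 < f (gapMid ζ k) * (signChangePoly f ζ m).eval (gapMid ζ k) *
      (f (gapMid ζ (k + 1)) * (signChangePoly f ζ m).eval (gapMid ζ (k + 1))) := by
  set x := gapMid ζ k
  set y := gapMid ζ (k + 1)
  have hx : x ∈ Ioo (ζ k) (ζ (k + 1)) := gapMid_mem hζ (by omega)
  have hy : y ∈ Ioo (ζ (k + 1)) (ζ (k + 2)) := gapMid_mem hζ hk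
  have hfac : ∀ j ∈ signChanges f ζ m, j ≠ k → 0 < (x - ζ (j + 1)) * (y - ζ (j + 1)) :=
    fun j hj hjk => sub_mul_sub_pos hζ (by simp [signChanges] at hj; omega) hjk hk hx hy
  have hprod : (signChangePoly f ζ m).eval x * (signChangePoly f ζ m).eval y =
      ∏ j ∈ signChanges f ζ m, (x - ζ (j + 1)) * (y - ζ (j + 1)) := by
    simp [signChangePoly, eval_prod, Finset.prod_mul_distrib]
  rw [mul_mul_mul_comm, hprod]
  by_cases hkT : k ∈ signChanges f ζ m
  · refine mul_pos_of_neg_of_neg (Finset.mem_filter.1 hkT).2 ?_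
    rw [← Finset.mul_prod_erase _ _ hkT]
    exact mul_neg_of_neg_of_pos (mul_neg_of_neg_of_pos (by linarith [hx.2]) (by linarith [hy.1]))
      (Finset.prod_pos fun j hj => hfac j (Finset.mem_of_mem_erase hj) (Finset.ne_of_mem_erase hj))
  · have hfxy : 0 < f x * f y := by
      refine lt_of_le_of_ne (not_lt.1 fun h => hkT ?_) (mul_ne_zero (hgap k (by omega) x hx)
        (hgap (k + 1) hk y hy)).symm
      exact Finset.mem_filter.2 ⟨Finset.mem_range.2 (by omega), h⟩
    exact mul_pos hfxy (Finset.prod_pos fun j hj => hfac j hj (ne_of_mem_of_not_mem hj hkT))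

theorem le_card_signChanges (hm : 0 < m) (hf : Continuous f)
    (hgap : ∀ k < m, ∀ x ∈ Ioo (ζ k) (ζ (k + 1)), f x ≠ 0) {N : ℕ}
    (horth : ∀ q : ℝ[X], q.degree < N → ∫ x in ζ 0..ζ m, f x * q.eval x = 0) :
    N ≤ (signChanges f ζ m).card := by
  by_contra! hN
  set G : ℝ → ℝ := fun x => f x * (signChangePoly f ζ m).eval x
  have hGcont : Continuous G := hf.mul (signChangePoly f ζ m).continuous
  have hG : ∀ k < m, ∀ x ∈ Ioo (ζ k) (ζ (k + 1)), G x ≠ 0 := fun k hk x hx =>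
    mul_ne_zero (hgap k hk x hx) (eval_signChangePoly_ne_zero hζ hk hx)
  have hmid : ∀ k < m, 0 < G (gapMid ζ 0) * G (gapMid ζ k) :=
    mul_pos_of_forall_mul_succ_pos (a := fun k => G (gapMid ζ k))
      (fun k hk => signChangePoly_mul_pos hζ hgap hk) (hG 0 hm _ (gapMid_mem hζ hm))
  have hpos : ∀ k < m, ∀ x ∈ Ioo (ζ k) (ζ (k + 1)), 0 < G (gapMid ζ 0) * G x :=
    fun k hk x hx => mul_pos_of_mul_pos_of_mul_pos (hmid k hk)
      (isPreconnected_Ioo.mul_pos_of_ne_zero hGcont.continuousOn (hG k hk) (gapMid_mem hζ hk) hx)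
  have hint : ∀ a b, IntervalIntegrable (fun x => G (gapMid ζ 0) * G x) volume a b :=
    fun a b => (continuous_const.mul hGcont).intervalIntegrable a b
  have hI : 0 < ∫ x in ζ 0..ζ m, G (gapMid ζ 0) * G x := by
    rw [← sum_integral_adjacent_intervals fun k _ => hint _ _]
    refine Finset.sum_pos (fun k hk => ?_) ⟨0, Finset.mem_range.2 hm⟩
    have hk := Finset.mem_range.1 hk
    exact intervalIntegral_pos_of_pos_on (hint _ _) (hpos k hk) (lt_succ_of_strictMonoOn hζ hk)
  rw [intervalIntegral.integral_const_mul,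
    horth _ (by rw [degree_signChangePoly]; exact_mod_cast hN), mul_zero] at hI
  exact hI.false

theorem exists_alternating_of_card_signChanges (hf : Continuous f)
    (hgap : ∀ k < m, ∀ x ∈ Ioo (ζ k) (ζ (k + 1)), f x ≠ 0)
    (hcard : (signChanges f ζ m).card = m - 1) :
    ∃ σ : ℝ, (σ = 1 ∨ σ = -1) ∧ ∀ k < m, ∀ x ∈ Ioo (ζ k) (ζ (k + 1)), 0 < σ * (-1) ^ k * f x := by
  have hT : signChanges f ζ m = Finset.range (m - 1) :=
    Finset.eq_of_subset_of_card_le (Finset.filter_subset _ _) (by rw [Finset.card_range, hcard])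
  have hchange : ∀ k, k + 1 < m → f (gapMid ζ k) * f (gapMid ζ (k + 1)) < 0 := fun k hk => by
    have hk : k ∈ signChanges f ζ m := hT ▸ Finset.mem_range.2 (by omega)
    exact (Finset.mem_filter.1 hk).2
  refine ⟨if 0 < f (gapMid ζ 0) then 1 else -1, by split_ifs <;> simp, fun k hk x hx => ?_⟩
  have h₀ : f (gapMid ζ 0) ≠ 0 := hgap 0 (by omega) _ (gapMid_mem hζ (by omega))
  have hσ : 0 < (if 0 < f (gapMid ζ 0) then 1 else -1) * f (gapMid ζ 0) := by
    split_ifs with h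
    · linarith
    · linarith [lt_of_le_of_ne (not_lt.1 h) h₀]
  have halt := mul_pos_of_forall_mul_succ_pos (a := fun k => (-1) ^ k * f (gapMid ζ k))
    (fun k hk => by
      have hsq : ((-1 : ℝ) ^ k) ^ 2 = 1 := by rw [← pow_mul, pow_mul', neg_one_sq, one_pow]
      have : (-1) ^ k * f (gapMid ζ k) * ((-1) ^ (k + 1) * f (gapMid ζ (k + 1))) =
          -(f (gapMid ζ k) * f (gapMid ζ (k + 1))) * ((-1 : ℝ) ^ k) ^ 2 := by ring
      rw [this, hsq, mul_one]
      exact neg_pos.2 (hchange k hk))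
    (by simpa using h₀) k hk
  have hσk := mul_pos_of_mul_pos_of_mul_pos hσ (by simpa using halt)
  rw [← mul_assoc] at hσk
  exact mul_pos_of_mul_pos_of_mul_pos hσk
    (isPreconnected_Ioo.mul_pos_of_ne_zero hf.continuousOn (hgap k hk) (gapMid_mem hζ hk) hx)

end SignChanges

section Weight

variable {α βm βp : ℝ}

theorem measurable_betaHat_inv : Measurable fun t => (betaHat α βm βp t)⁻¹ :=
  (Measurable.ite measurableSet_Iic measurable_const measurable_const).inv

theorem norm_betaHat_inv_le (t : ℝ) : ‖(betaHat α βm βp t)⁻¹‖ ≤ max ‖βm⁻¹‖ ‖βp⁻¹‖ := by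
  unfold betaHat
  split_ifs
  exacts [le_max_left _ _, le_max_right _ _]

theorem betaHat_inv_pos (hβm : 0 < βm) (hβp : 0 < βp) (t : ℝ) : 0 < (betaHat α βm βp t)⁻¹ := by
  unfold betaHat
  split_ifs <;> positivity

theorem continuousAt_betaHat_inv {x : ℝ} (hx : x ≠ α) :
    ContinuousAt (fun t => (betaHat α βm βp t)⁻¹) x := by
  have hconst : ∀ᶠ t in 𝓝 x, betaHat α βm βp t = betaHat α βm βp x := by
    rcases hx.lt_or_gt with h | h
    · filter_upwards [Iio_mem_nhds h] with t ht
      simp [betaHat, (mem_Iio.1 ht).le, h.le]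
    · filter_upwards [Ioi_mem_nhds h] with t ht
      simp [betaHat, not_le.2 (mem_Ioi.1 ht), not_le.2 h]
  exact (continuousAt_const (y := (betaHat α βm βp x)⁻¹)).congr
    (hconst.mono fun t ht => by simp only [ht])

theorem intervalIntegrable_betaHat_inv_mul {g : ℝ → ℝ} (hg : Continuous g) (a b : ℝ) :
    IntervalIntegrable (fun t => (betaHat α βm βp t)⁻¹ * g t) volume a b := by
  rw [intervalIntegrable_iff]
  exact hg.integrableOn_uIoc.bdd_mul measurable_betaHat_inv.aestronglyMeasurable.restrict
    (ae_of_all _ norm_betaHat_inv_le)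

end Weight

section Lobatto

variable {α βm βp : ℝ} {L : ℕ → ℝ[X]} {n : ℕ}

theorem continuous_phiGen' : Continuous (phiGen' α βm βp L n) :=
  continuous_primitive (intervalIntegrable_betaHat_inv_mul (L n).continuous) (-1)

theorem hasDerivAt_phiGen' {x : ℝ} (hx : x ≠ α) :
    HasDerivAt (phiGen' α βm βp L n) ((betaHat α βm βp x)⁻¹ * (L n).eval x) x :=
  integral_hasDerivAt_right (intervalIntegrable_betaHat_inv_mul (L n).continuous _ _)
    ((measurable_betaHat_inv.mul (L n).continuous.measurable).stronglyMeasurable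
      |>.stronglyMeasurableAtFilter)
    ((continuousAt_betaHat_inv hx).mul (L n).continuous.continuousAt)

theorem exists_isRoot_of_phiGen'_eq (hβm : 0 < βm) (hβp : 0 < βp) {a b : ℝ} (hab : a < b)
    (h : phiGen' α βm βp L n a = phiGen' α βm βp L n b) : ∃ c ∈ Ioo a b, (L n).IsRoot c := by
  refine exists_mem_Ioo_eq_zero_of_integral_mul_eq_zero (w := fun x => (betaHat α βm βp x)⁻¹) hab
    (fun x _ => betaHat_inv_pos hβm hβp x)
    (L n).continuous.continuousOn (intervalIntegrable_betaHat_inv_mul (L n).continuous a b) ?_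
  rw [← integral_interval_sub_left (intervalIntegrable_betaHat_inv_mul (L n).continuous _ _)
    (intervalIntegrable_betaHat_inv_mul (L n).continuous _ _)]
  exact sub_eq_zero.2 h.symm

theorem card_le_of_forall_phiGen'_eq_zero (hβm : 0 < βm) (hβp : 0 < βp) (hL : L n ≠ 0)
    (s : Finset ℝ) (hs : ∀ x ∈ s, phiGen' α βm βp L n x = 0) : s.card ≤ (L n).natDegree + 1 :=
  calc s.card ≤ (L n).roots.toFinset.card + 1 := by
        refine Finset.card_le_of_interleaved fun x hx y hy hxy _ => ?_
        obtain ⟨c, hc, hroot⟩ :=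
          exists_isRoot_of_phiGen'_eq hβm hβp hxy ((hs x hx).trans (hs y hy).symm)
        exact ⟨c, Multiset.mem_toFinset.2 ((mem_roots hL).2 hroot), hc⟩
    _ ≤ (L n).natDegree + 1 := by
        gcongr
        exact (Multiset.toFinset_card_le _).trans (card_roots' _)

theorem integral_phiGen'_mul_derivative (Q : ℝ[X]) (a b : ℝ) :
    ∫ x in a..b, phiGen' α βm βp L n x * (derivative Q).eval x =
      phiGen' α βm βp L n b * Q.eval b - phiGen' α βm βp L n a * Q.eval a -
        ∫ x in a..b, (betaHat α βm βp x)⁻¹ * (L n).eval x * Q.eval x := by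
  have hint₁ : IntervalIntegrable
      (fun x => (betaHat α βm βp x)⁻¹ * (L n).eval x * Q.eval x) volume a b := by
    simpa only [mul_assoc] using intervalIntegrable_betaHat_inv_mul
      (g := fun x => (L n).eval x * Q.eval x) ((L n).continuous.mul Q.continuous) a b
  have hint₂ : IntervalIntegrable
      (fun x => phiGen' α βm βp L n x * (derivative Q).eval x) volume a b :=
    (continuous_phiGen'.mul (derivative Q).continuous).intervalIntegrable a b
  have hFTC := integral_eq_of_hasDerivAt_off_countable (fun x => phiGen' α βm βp L n x * Q.eval x)
    _ (countable_singleton α)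
    (continuous_phiGen'.mul Q.continuous).continuousOn
    (fun x hx => (hasDerivAt_phiGen' hx.2).mul (Q.hasDerivAt x)) (hint₁.add hint₂)
  rw [integral_add hint₁ hint₂] at hFTC
  linarith

variable (hmonic : ∀ k, (L k).Monic) (hdeg : ∀ k, (L k).natDegree = k)
  (horth : ∀ j k, j ≠ k →
    ∫ x in (-1 : ℝ)..1, (betaHat α βm βp x)⁻¹ * (L j).eval x * (L k).eval x = 0)
include hmonic hdeg horth

theorem integral_betaHat_inv_mul_eval_eq_zero {p : ℝ[X]} (hp : p.degree < n) :
    ∫ x in (-1 : ℝ)..1, (betaHat α βm βp x)⁻¹ * (L n).eval x * p.eval x = 0 := by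
  refine integral_mul_eval_eq_zero_of_mem_span (h := fun x => (betaHat α βm βp x)⁻¹ * (L n).eval x)
    (fun q => ?_) ?_ (mem_span_image_Iio_of_degree_lt hmonic hdeg hp)
  · simpa only [mul_assoc] using intervalIntegrable_betaHat_inv_mul
      (g := fun x => (L n).eval x * q.eval x) ((L n).continuous.mul q.continuous) (-1) 1
  · rintro _ ⟨k, hk, rfl⟩
    exact horth n k (ne_of_gt hk)

theorem phiGen'_one (hn : n ≠ 0) : phiGen' α βm βp L n 1 = 0 := by
  simpa [phiGen'] using integral_betaHat_inv_mul_eval_eq_zero hmonic hdeg horth (p := 1)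
    (by rw [degree_one]; exact_mod_cast Nat.pos_of_ne_zero hn)

theorem integral_phiGen'_mul_eval_eq_zero (hn : n ≠ 0) {q : ℝ[X]} (hq : q.degree < ↑(n - 1)) :
    ∫ x in (-1 : ℝ)..1, phiGen' α βm βp L n x * q.eval x = 0 := by
  classical
  have hspan : q ∈ degreeLT ℝ (n - 1) := mem_degreeLT.2 hq
  rw [degreeLT_eq_span_X_pow, Finset.coe_image] at hspan
  refine integral_mul_eval_eq_zero_of_mem_span
    (fun p => (continuous_phiGen'.mul p.continuous).intervalIntegrable _ _) ?_ hspan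
  rintro _ ⟨k, hk, rfl⟩
  have hk : k + 1 < n := by simp at hk; omega
  have hderiv : derivative (C ((k + 1 : ℝ)⁻¹) * X ^ (k + 1)) = X ^ k := by
    rw [derivative_C_mul_X_pow, Nat.add_sub_cancel, Nat.cast_add_one,
      inv_mul_cancel₀ (by positivity), C_1, one_mul]
  beta_reduce
  rw [← hderiv, integral_phiGen'_mul_derivative, phiGen'_one hmonic hdeg horth hn,
    integral_betaHat_inv_mul_eval_eq_zero hmonic hdeg horth]
  · simp [phiGen']
  · exact (degree_C_mul_X_pow_le _ _).trans_lt (by exact_mod_cast hk)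

end Lobatto

theorem generalized_lobatto_sign_changes_general
    (α βm βp : ℝ) (hβm : 0 < βm) (hβp : 0 < βp)
    (L : ℕ → Polynomial ℝ) (hmonic : ∀ k, (L k).Monic) (hdeg : ∀ k, (L k).natDegree = k)
    (horth : ∀ j k, j ≠ k →
      ∫ x in (-1 : ℝ)..1, (betaHat α βm βp x)⁻¹ * (L j).eval x * (L k).eval x = 0)
    (n : ℕ) (hn : 1 ≤ n) :
    ∃ z : Fin (n + 1) → ℝ, StrictMono z ∧ z 0 = -1 ∧ z (Fin.last n) = 1 ∧
      ∃ σ : ℝ, (σ = 1 ∨ σ = -1) ∧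
        ∀ i : Fin n, ∀ x ∈ Set.Ioo (z i.castSucc) (z i.succ),
          0 < σ * (-1 : ℝ) ^ (i : ℕ) * phiGen' α βm βp L n x := by
  have hn₀ : n ≠ 0 := by omega
  obtain ⟨m, hmn, ζ, hζ, hζ₀, hζm, hgap⟩ :=
    exists_partition_of_card_zeros_le (f := phiGen' α βm βp L n) (by norm_num) integral_same
      (phiGen'_one hmonic hdeg horth hn₀) fun s hs =>
        hdeg n ▸ card_le_of_forall_phiGen'_eq_zero hβm hβp (hmonic n).ne_zero s hs
  have hm : 0 < m := Nat.pos_of_ne_zero fun h => by subst h; linarith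
  have hlow := le_card_signChanges hζ hm continuous_phiGen' hgap (N := n - 1) fun q hq => by
    rw [hζ₀, hζm]; exact integral_phiGen'_mul_eval_eq_zero hmonic hdeg horth hn₀ hq
  have hup := card_signChanges_le (f := phiGen' α βm βp L n) (ζ := ζ) (m := m)
  obtain rfl : m = n := by omega
  obtain ⟨σ, hσ, hpos⟩ :=
    exists_alternating_of_card_signChanges hζ continuous_phiGen' hgap (by omega)
  refine ⟨fun i => ζ i, fun i j hij => hζ i.is_le j.is_le hij, hζ₀, hζm, σ, hσ,
    fun i x hx => hpos i i.is_lt x ?_⟩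
  simpa using hx

/-- `φ_{n+1}` changes sign exactly `n-1` times in `(-1,1)`: there are `n-1` interior
crossing points partitioning `(-1,1)` into `n` subintervals on which `φ_{n+1}` is
strictly of one sign, with alternating signs. -/
theorem generalized_lobatto_sign_changes
    (α βm βp : ℝ) (hα : α ∈ Set.Ioo (-1 : ℝ) 1) (hβm : 0 < βm) (hβp : 0 < βp)
    (L : ℕ → Polynomial ℝ) (hmonic : ∀ k, (L k).Monic) (hdeg : ∀ k, (L k).natDegree = k)
    (horth : ∀ j k, j ≠ k →
      ∫ x in (-1 : ℝ)..1, (betaHat α βm βp x)⁻¹ * (L j).eval x * (L k).eval x = 0)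
    (n : ℕ) (hn : 1 ≤ n) :
    ∃ z : Fin (n + 1) → ℝ, StrictMono z ∧ z 0 = -1 ∧ z (Fin.last n) = 1 ∧
      ∃ σ : ℝ, (σ = 1 ∨ σ = -1) ∧
        ∀ i : Fin n, ∀ x ∈ Set.Ioo (z i.castSucc) (z i.succ),
          0 < σ * (-1 : ℝ) ^ (i : ℕ) * phiGen' α βm βp L n x :=
  generalized_lobatto_sign_changes_general α βm βp hβm hβp L hmonic hdeg horth n hn
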